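/- arXiv:1007.3604 — 7 statements merged into one kernel-verified Lean document; each statement's English description precedes it below -/
import Mathlib

section
/- Let f : 2^[n] → ℝ₊ be a monotone submodular set function, let A ∈ ℝ₊^{m×n} be a nonnegative matrix, b ∈ ℝ₊^m, let w ∈ ℝ₊^m be nonnegative weights, let S ⊆ [n], and let α > 0 satisfy α · f_S(j) ≤ Σ_{i=1}^m A_{ij} w_i for every j ∈ [n]∖S. Then for every S* ⊆ [n] that is feasible (Σ_{j∈S*} A_{ij} ≤ b_i for all i ∈ [m]), it holds that f(S*) ≤ f(S) + (Σ_{i=1}^m b_i w_i) / α. -/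
/-!
Submodularity makes marginal values diminish, so adding the elements of `S* \ S` to `S` one at a
time gains at most `∑_{j ∈ S* \ S} f_S(j)`. Each of these marginals is at most `(Aᵀw)_j / α`, and
summing the columns of `A` over the feasible set `S*` against `w ≥ 0` gives at most `⟨b, w⟩`.
-/

open Finset

section Submodular

variable {ι : Type*} [DecidableEq ι] {f : Finset ι → ℝ}

theorem marginal_le_marginal_of_subset (hf : ∀ S T, f (S ∪ T) + f (S ∩ T) ≤ f S + f T)
    {S T : Finset ι} (hST : S ⊆ T) {a : ι} (ha : a ∉ T) :
    f (insert a T) - f T ≤ f (insert a S) - f S := by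
  have h := hf (insert a S) T
  rw [insert_union, union_eq_right.mpr hST, insert_inter_of_notMem ha,
    inter_eq_left.mpr hST] at h
  linarith

theorem le_add_sum_marginal_of_disjoint (hf : ∀ S T, f (S ∪ T) + f (S ∩ T) ≤ f S + f T)
    (S : Finset ι) {D : Finset ι} (hD : Disjoint S D) :
    f (S ∪ D) ≤ f S + ∑ j ∈ D, (f (insert j S) - f S) := by
  induction D using Finset.induction_on with
  | empty => simp
  | @insert a D haD ih =>
    rw [disjoint_insert_right] at hD
    have hmarg : f (insert a (S ∪ D)) - f (S ∪ D) ≤ f (insert a S) - f S :=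
      marginal_le_marginal_of_subset hf subset_union_left (by simp [hD.1, haD])
    rw [union_insert, sum_insert haD]
    linarith [ih hD.2]

theorem union_le_add_sum_marginal (hf : ∀ S T, f (S ∪ T) + f (S ∩ T) ≤ f S + f T)
    (S T : Finset ι) :
    f (S ∪ T) ≤ f S + ∑ j ∈ T \ S, (f (insert j S) - f S) := by
  rw [← union_sdiff_self_eq_union]
  exact le_add_sum_marginal_of_disjoint hf S disjoint_sdiff

end Submodular

theorem sum_sum_mul_le_of_feasible {κ ι : Type*} [Fintype κ] (A : κ → ι → ℝ) (b w : κ → ℝ)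
    (hw : ∀ i, 0 ≤ w i) (T : Finset ι) (hfeas : ∀ i, ∑ j ∈ T, A i j ≤ b i) :
    ∑ j ∈ T, ∑ i, A i j * w i ≤ ∑ i, b i * w i := by
  rw [sum_comm]
  gcongr with i
  rw [← sum_mul]
  exact mul_le_mul_of_nonneg_right (hfeas i) (hw i)

theorem stmt_2_general (m n : ℕ) (f : Finset (Fin n) → ℝ)
    (hf_mono : ∀ S T : Finset (Fin n), S ⊆ T → f S ≤ f T)
    (hf_submod : ∀ S T : Finset (Fin n), f (S ∪ T) + f (S ∩ T) ≤ f S + f T)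
    (A : Fin m → Fin n → ℝ) (hA : ∀ i j, 0 ≤ A i j)
    (b : Fin m → ℝ)
    (w : Fin m → ℝ) (hw : ∀ i, 0 ≤ w i)
    (S : Finset (Fin n)) (α : ℝ) (hα : 0 < α)
    (hsel : ∀ j : Fin n, j ∉ S → α * (f (insert j S) - f S) ≤ ∑ i, A i j * w i)
    (Sstar : Finset (Fin n)) (hfeas : ∀ i, ∑ j ∈ Sstar, A i j ≤ b i) :
    f Sstar ≤ f S + (∑ i, b i * w i) / α := by
  calc f Sstar ≤ f (S ∪ Sstar) := hf_mono _ _ subset_union_right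
    _ ≤ f S + ∑ j ∈ Sstar \ S, (f (insert j S) - f S) :=
      union_le_add_sum_marginal hf_submod S Sstar
    _ ≤ f S + ∑ j ∈ Sstar \ S, (∑ i, A i j * w i) / α := by
      gcongr with j hj
      rw [le_div_iff₀ hα, mul_comm]
      exact hsel j (mem_sdiff.mp hj).2
    _ ≤ f S + ∑ j ∈ Sstar, (∑ i, A i j * w i) / α := by
      gcongr f S + ?_
      refine sum_le_sum_of_subset_of_nonneg sdiff_subset fun j _ _ => ?_
      exact div_nonneg (sum_nonneg fun i _ => mul_nonneg (hA i j) (hw i)) hα.le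
    _ ≤ f S + (∑ i, b i * w i) / α := by
      rw [← sum_div]
      gcongr
      exact sum_sum_mul_le_of_feasible A b w hw Sstar hfeas

/-- Let `f : 2^[n] → ℝ₊` be a monotone submodular set function,
`A ∈ ℝ₊^{m×n}` nonnegative, `b ∈ ℝ₊^m`, `w ∈ ℝ₊^m` nonnegative weights, `S ⊆ [n]`,
and `α > 0` with `α · f_S(j) ≤ Σ_i A_{ij} w_i` for every `j ∉ S`. Then for every
feasible `S*` (i.e. `Σ_{j∈S*} A_{ij} ≤ b_i` for all `i`),
`f(S*) ≤ f(S) + (Σ_i b_i w_i) / α`. -/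
theorem stmt_2 (m n : ℕ) (f : Finset (Fin n) → ℝ)
    (hf_nonneg : ∀ S, 0 ≤ f S)
    (hf_mono : ∀ S T : Finset (Fin n), S ⊆ T → f S ≤ f T)
    (hf_submod : ∀ S T : Finset (Fin n), f (S ∪ T) + f (S ∩ T) ≤ f S + f T)
    (A : Fin m → Fin n → ℝ) (hA : ∀ i j, 0 ≤ A i j)
    (b : Fin m → ℝ) (hb : ∀ i, 0 ≤ b i)
    (w : Fin m → ℝ) (hw : ∀ i, 0 ≤ w i)
    (S : Finset (Fin n)) (α : ℝ) (hα : 0 < α)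
    (hsel : ∀ j : Fin n, j ∉ S → α * (f (insert j S) - f S) ≤ ∑ i, A i j * w i)
    (Sstar : Finset (Fin n)) (hfeas : ∀ i, ∑ j ∈ Sstar, A i j ≤ b i) :
    f Sstar ≤ f S + (∑ i, b i * w i) / α :=
  stmt_2_general m n f hf_mono hf_submod A hA b w hw S α hα hsel Sstar hfeas
end

section
/- Let m ≥ 1, A ∈ [0,1]^{m×n}, b ∈ [1,∞)^m, and W ≥ 1 with W·A_{ij} ≤ b_i for all i ∈ [m], j ∈ [n]. Let f : 2^[n] → ℝ₊ be a normalized monotone submodular set function and set λ = e^W·m. Let ∅ = S_0 ⊂ S_1 ⊂ ⋯ ⊂ S_t ⊆ [n] be a chain with S_ℓ = S_{ℓ−1} ∪ {γ_ℓ}, γ_ℓ ∉ S_{ℓ−1}, and define weights w_{iℓ} = (1/b_i)·λ^{(Σ_{j∈S_ℓ} A_{ij})/b_i} (so w_{i0} = 1/b_i). Assume for every ℓ ∈ {1,…,t}: (i) δ_ℓ := f(S_ℓ) − f(S_{ℓ−1}) > 0, and (ii) γ_ℓ minimizes the weight-to-marginal ratio, i.e., f_{S_{ℓ−1}}(j)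 · Σ_{i=1}^m A_{iγ_ℓ} w_{i(ℓ−1)} ≤ δ_ℓ · Σ_{i=1}^m A_{ij} w_{i(ℓ−1)} for every j ∈ [n]∖S_{ℓ−1}. Let S* ⊆ [n] be feasible (Σ_{j∈S*} A_{ij} ≤ b_i for all i) with f(S*) > f(S_t). If Σ_{i=1}^m b_i w_{it} > e^W·m, then f(S_t) ≥ f(S*) / (e·m^{1/W} + 1). -/
/-!
The potential `Φ(S) = Σᵢ bᵢ wᵢ(S)` starts at `m`. Adding the greedy element `γ` multiplies
`wᵢ` by `λ^{A_{iγ}/b_i}`, and since `W·A_{iγ}/b_i ≤ 1`, Bernoulli's inequality bounds the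
increase by `(λ^{1/W} - 1) W Σᵢ A_{iγ} wᵢ`. Summing the greedy inequality over `S* \ S` and
using submodularity and feasibility bounds `Σᵢ A_{iγ} wᵢ` by `δ Φ / (f(S*) - f(S_t))`, where
`δ = f(S ∪ {γ}) - f(S)`, so each step multiplies `Φ` by at most
`exp((λ^{1/W} - 1) W δ / (f(S*) - f(S_t)))`. Hence
`e^W m < Φ(S_t) ≤ m exp((λ^{1/W} - 1) W f(S_t) / (f(S*) - f(S_t)))`, which rearranges to
`f(S*) < λ^{1/W} f(S_t)`, and `λ^{1/W} = e·m^{1/W}`.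
-/

open Finset Real

lemma rpow_le_one_add_mul_of_mul_le_one {a W x : ℝ} (ha : 0 ≤ a) (hW : 0 < W) (hx : 0 ≤ x)
    (hWx : W * x ≤ 1) : a ^ x ≤ 1 + (a ^ (1 / W) - 1) * (W * x) := by
  have hpow : a ^ x = (1 + (a ^ (1 / W) - 1)) ^ (W * x) := by
    rw [add_sub_cancel, ← rpow_mul ha]; field_simp
  rw [hpow, mul_comm (a ^ (1 / W) - 1)]
  exact rpow_one_add_le_one_add_mul_self (by linarith [rpow_nonneg ha (1 / W)])
    (mul_nonneg hW.le hx) hWx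

lemma le_mul_exp_sub_of_forall_succ_le {Φ g : ℕ → ℝ} {t : ℕ}
    (h : ∀ ℓ < t, Φ (ℓ + 1) ≤ Φ ℓ * exp (g (ℓ + 1) - g ℓ)) :
    ∀ ℓ ≤ t, Φ ℓ ≤ Φ 0 * exp (g ℓ - g 0) := by
  intro ℓ
  induction ℓ with
  | zero => simp
  | succ ℓ ih =>
    intro hℓ
    calc Φ (ℓ + 1) ≤ Φ ℓ * exp (g (ℓ + 1) - g ℓ) := h ℓ hℓ
      _ ≤ Φ 0 * exp (g ℓ - g 0) * exp (g (ℓ + 1) - g ℓ) := by gcongr; exact ih (by omega)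
      _ = Φ 0 * exp (g (ℓ + 1) - g 0) := by rw [mul_assoc, ← exp_add]; ring_nf

section Submodular

variable {α : Type*} [DecidableEq α] {f : Finset α → ℝ}

lemma sub_le_sum_sdiff_of_submodular (hf : ∀ S T, f (S ∪ T) + f (S ∩ T) ≤ f S + f T)
    (S T : Finset α) : f (S ∪ T) - f S ≤ ∑ j ∈ T \ S, (f (insert j S) - f S) := by
  induction T using Finset.induction_on with
  | empty => simp
  | @insert a T ha ih =>
    by_cases haS : a ∈ S
    · rwa [union_insert, insert_eq_of_mem (mem_union_left _ haS), insert_sdiff_of_mem _ haS]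
    · have hsub := hf (insert a S) (S ∪ T)
      rw [show insert a S ∪ (S ∪ T) = S ∪ insert a T by grind,
        show insert a S ∩ (S ∪ T) = S by grind] at hsub
      rw [insert_sdiff_of_notMem _ haS, sum_insert (fun h ↦ ha (mem_sdiff.1 h).1)]
      linarith

variable {ι : Type*} [Fintype ι]

lemma sub_mul_sum_le_mul_sum_of_greedy (hf : ∀ S T, f (S ∪ T) + f (S ∩ T) ≤ f S + f T)
    {A : ι → α → ℝ} (hA : ∀ i j, 0 ≤ A i j) {b v : ι → ℝ} (hv : ∀ i, 0 ≤ v i)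
    {S T : Finset α} (hT : ∀ i, ∑ j ∈ T, A i j ≤ b i) {g : α} {δ : ℝ} (hδ : 0 ≤ δ)
    (hgreedy : ∀ j ∉ S, (f (insert j S) - f S) * ∑ i, A i g * v i ≤ δ * ∑ i, A i j * v i) :
    (f (S ∪ T) - f S) * ∑ i, A i g * v i ≤ δ * ∑ i, b i * v i := by
  have hAv : ∀ j, 0 ≤ ∑ i, A i j * v i := fun j ↦ sum_nonneg fun i _ ↦ mul_nonneg (hA i j) (hv i)
  calc (f (S ∪ T) - f S) * ∑ i, A i g * v i
      ≤ ∑ j ∈ T \ S, (f (insert j S) - f S) * ∑ i, A i g * v i := by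
        rw [← sum_mul]; gcongr
        · exact hAv g
        · exact sub_le_sum_sdiff_of_submodular hf S T
    _ ≤ ∑ j ∈ T \ S, δ * ∑ i, A i j * v i :=
        sum_le_sum fun j hj ↦ hgreedy j (mem_sdiff.1 hj).2
    _ ≤ ∑ j ∈ T, δ * ∑ i, A i j * v i :=
        sum_le_sum_of_subset_of_nonneg sdiff_subset fun j _ _ ↦ mul_nonneg hδ (hAv j)
    _ = δ * ∑ i, (∑ j ∈ T, A i j) * v i := by rw [← mul_sum, sum_comm]; simp only [sum_mul]
    _ ≤ δ * ∑ i, b i * v i := by gcongr with i; exacts [hv i, hT i]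

end Submodular

section Potential

variable {ι α : Type*}

noncomputable def packingWeight (A : ι → α → ℝ) (b : ι → ℝ) (lam : ℝ) (S : Finset α) (i : ι) :
    ℝ :=
  1 / b i * lam ^ ((∑ j ∈ S, A i j) / b i)

noncomputable def packingPotential [Fintype ι] (A : ι → α → ℝ) (b : ι → ℝ) (lam : ℝ)
    (S : Finset α) : ℝ :=
  ∑ i, b i * packingWeight A b lam S i

variable {A : ι → α → ℝ} {b : ι → ℝ} {lam : ℝ}

lemma packingWeight_nonneg (hb : ∀ i, 0 < b i) (hlam : 0 ≤ lam) (S : Finset α) (i : ι) :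
    0 ≤ packingWeight A b lam S i :=
  mul_nonneg (one_div_pos.2 (hb i)).le (rpow_nonneg hlam _)

lemma packingPotential_empty [Fintype ι] (hb : ∀ i, b i ≠ 0) :
    packingPotential A b lam ∅ = Fintype.card ι := by
  simp [packingPotential, packingWeight, hb]

lemma packingWeight_insert [DecidableEq α] (hlam : 0 < lam) {S : Finset α} {g : α} (hg : g ∉ S)
    (i : ι) :
    packingWeight A b lam (insert g S) i = packingWeight A b lam S i * lam ^ (A i g / b i) := by
  rw [packingWeight, packingWeight, sum_insert hg, add_comm, add_div, rpow_add hlam, mul_assoc]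

lemma packingPotential_insert_le [Fintype ι] [DecidableEq α] (hb : ∀ i, 0 < b i) (hlam : 0 < lam)
    {W : ℝ} (hW : 0 < W) {S : Finset α} {g : α} (hg : g ∉ S) (hA : ∀ i, 0 ≤ A i g)
    (hwidth : ∀ i, W * A i g ≤ b i) :
    packingPotential A b lam (insert g S) ≤ packingPotential A b lam S +
      (lam ^ (1 / W) - 1) * W * ∑ i, A i g * packingWeight A b lam S i := by
  rw [packingPotential, packingPotential, mul_sum, ← sum_add_distrib]
  refine sum_le_sum fun i _ ↦ ?_
  have hWx : W * (A i g / b i) ≤ 1 := by rw [← mul_div_assoc, div_le_one (hb i)]; exact hwidth i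
  have hpow := rpow_le_one_add_mul_of_mul_le_one hlam.le hW (div_nonneg (hA i) (hb i).le) hWx
  have hw := packingWeight_nonneg (A := A) hb hlam.le S i
  rw [packingWeight_insert hlam hg]
  calc b i * (packingWeight A b lam S i * lam ^ (A i g / b i))
      ≤ b i * (packingWeight A b lam S i * (1 + (lam ^ (1 / W) - 1) * (W * (A i g / b i)))) := by
        gcongr; exact (hb i).le
    _ = _ := by field_simp [(hb i).ne']

lemma packingPotential_insert_le_mul_exp [Fintype ι] [DecidableEq α] {f : Finset α → ℝ}
    (hf : ∀ S T, f (S ∪ T) + f (S ∩ T) ≤ f S + f T) (hA : ∀ i j, 0 ≤ A i j)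
    (hb : ∀ i, 0 < b i) (hlam : 1 ≤ lam) {W : ℝ} (hW : 0 < W) {S T : Finset α} {g : α}
    (hg : g ∉ S) (hwidth : ∀ i, W * A i g ≤ b i) (hT : ∀ i, ∑ j ∈ T, A i j ≤ b i) {D : ℝ}
    (hD : 0 < D) (hDle : D ≤ f (S ∪ T) - f S) (hδ : 0 ≤ f (insert g S) - f S)
    (hgreedy : ∀ j ∉ S, (f (insert j S) - f S) * ∑ i, A i g * packingWeight A b lam S i ≤
      (f (insert g S) - f S) * ∑ i, A i j * packingWeight A b lam S i) :
    packingPotential A b lam (insert g S) ≤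
      packingPotential A b lam S * exp ((lam ^ (1 / W) - 1) * W / D * (f (insert g S) - f S)) := by
  set K := (lam ^ (1 / W) - 1) * W
  set δ := f (insert g S) - f S
  set Y := ∑ i, A i g * packingWeight A b lam S i
  set Φ := packingPotential A b lam S
  have hw := packingWeight_nonneg (A := A) hb (zero_le_one.trans hlam) S
  have hK : 0 ≤ K := mul_nonneg (sub_nonneg.2 (one_le_rpow hlam (by positivity))) hW.le
  have hY : 0 ≤ Y := sum_nonneg fun i _ ↦ mul_nonneg (hA i g) (hw i)
  have hΦ : 0 ≤ Φ := sum_nonneg fun i _ ↦ mul_nonneg (hb i).le (hw i)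
  have hDY : D * Y ≤ δ * Φ := (mul_le_mul_of_nonneg_right hDle hY).trans
    (sub_mul_sum_le_mul_sum_of_greedy hf hA hw hT hδ hgreedy)
  calc packingPotential A b lam (insert g S)
      ≤ Φ + K * Y := packingPotential_insert_le hb (by linarith) hW hg (hA · g) hwidth
    _ ≤ Φ + K * (δ * Φ / D) := by gcongr; rwa [le_div_iff₀ hD, mul_comm]
    _ = Φ * (K / D * δ + 1) := by field_simp; ring
    _ ≤ Φ * exp (K / D * δ) := by gcongr; exact add_one_le_exp _

lemma packingPotential_le_mul_exp_of_greedy_chain [Fintype ι] [DecidableEq α]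
    {f : Finset α → ℝ} (hf : ∀ S T, f (S ∪ T) + f (S ∩ T) ≤ f S + f T)
    (hf_mono : ∀ S T, S ⊆ T → f S ≤ f T) (hA : ∀ i j, 0 ≤ A i j) (hb : ∀ i, 0 < b i)
    (hlam : 1 ≤ lam) {W : ℝ} (hW : 0 < W) (hwidth : ∀ i j, W * A i j ≤ b i) {T : Finset α}
    (hT : ∀ i, ∑ j ∈ T, A i j ≤ b i) {S : ℕ → Finset α} {γ : ℕ → α} {t : ℕ}
    (hchain : ∀ ℓ < t, γ (ℓ + 1) ∉ S ℓ ∧ S (ℓ + 1) = insert (γ (ℓ + 1)) (S ℓ))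
    (hδ : ∀ ℓ < t, f (S ℓ) ≤ f (S (ℓ + 1)))
    (hgreedy : ∀ ℓ < t, ∀ j ∉ S ℓ,
      (f (insert j (S ℓ)) - f (S ℓ)) * ∑ i, A i (γ (ℓ + 1)) * packingWeight A b lam (S ℓ) i ≤
        (f (S (ℓ + 1)) - f (S ℓ)) * ∑ i, A i j * packingWeight A b lam (S ℓ) i)
    (hopt : f (S t) < f T) :
    packingPotential A b lam (S t) ≤ packingPotential A b lam (S 0) *
      exp ((lam ^ (1 / W) - 1) * W / (f T - f (S t)) * (f (S t) - f (S 0))) := by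
  set K := (lam ^ (1 / W) - 1) * W / (f T - f (S t))
  have hmono : MonotoneOn (f ∘ S) (Set.Iic t) :=
    monotoneOn_of_le_succ Set.ordConnected_Iic fun ℓ _ _ hℓ ↦ hδ ℓ (Order.succ_le_iff.1 hℓ)
  have hstep : ∀ ℓ < t, packingPotential A b lam (S (ℓ + 1)) ≤
      packingPotential A b lam (S ℓ) * exp (K * f (S (ℓ + 1)) - K * f (S ℓ)) := by
    intro ℓ hℓ
    obtain ⟨hγ, hS⟩ := hchain ℓ hℓ
    have hgr := hgreedy ℓ hℓ
    have hδℓ := hδ ℓ hℓ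
    rw [← mul_sub, hS]
    rw [hS] at hgr hδℓ
    refine packingPotential_insert_le_mul_exp hf hA hb hlam hW hγ (hwidth · _) hT
      (sub_pos.2 hopt) ?_ (sub_nonneg.2 hδℓ) hgr
    have hSt : f (S ℓ) ≤ f (S t) := hmono (Set.mem_Iic.2 hℓ.le) (Set.mem_Iic.2 le_rfl) hℓ.le
    linarith [hf_mono T (S ℓ ∪ T) subset_union_right]
  rw [mul_sub]
  exact le_mul_exp_sub_of_forall_succ_le (Φ := fun ℓ ↦ packingPotential A b lam (S ℓ))
    (g := fun ℓ ↦ K * f (S ℓ)) hstep t le_rfl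

end Potential

theorem stmt_4_general (m n t : ℕ)
    (A : Fin m → Fin n → ℝ) (hA : ∀ i j, 0 ≤ A i j ∧ A i j ≤ 1)
    (b : Fin m → ℝ) (hb : ∀ i, 1 ≤ b i)
    (W : ℝ) (hW : 1 ≤ W) (hwidth : ∀ i j, W * A i j ≤ b i)
    (f : Finset (Fin n) → ℝ)
    (hf_nonneg : ∀ S, 0 ≤ f S)
    (hf_norm : f ∅ = 0)
    (hf_mono : ∀ S T : Finset (Fin n), S ⊆ T → f S ≤ f T)
    (hf_submod : ∀ S T : Finset (Fin n), f (S ∪ T) + f (S ∩ T) ≤ f S + f T)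
    (lam : ℝ) (hlam : lam = Real.exp W * m)
    (S : ℕ → Finset (Fin n)) (γ : ℕ → Fin n)
    (hS0 : S 0 = ∅)
    (hchain : ∀ ℓ, 1 ≤ ℓ → ℓ ≤ t →
      γ ℓ ∉ S (ℓ - 1) ∧ S ℓ = insert (γ ℓ) (S (ℓ - 1)))
    (w : Fin m → ℕ → ℝ)
    (hw : ∀ i ℓ, w i ℓ = (1 / b i) * lam ^ ((∑ j ∈ S ℓ, A i j) / b i))
    (hδ : ∀ ℓ, 1 ≤ ℓ → ℓ ≤ t → 0 < f (S ℓ) - f (S (ℓ - 1)))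
    (hgreedy : ∀ ℓ, 1 ≤ ℓ → ℓ ≤ t → ∀ j : Fin n, j ∉ S (ℓ - 1) →
      (f (insert j (S (ℓ - 1))) - f (S (ℓ - 1))) * ∑ i, A i (γ ℓ) * w i (ℓ - 1)
        ≤ (f (S ℓ) - f (S (ℓ - 1))) * ∑ i, A i j * w i (ℓ - 1))
    (Sstar : Finset (Fin n))
    (hfeas : ∀ i, ∑ j ∈ Sstar, A i j ≤ b i)
    (hopt : f (S t) < f Sstar)
    (hterm : Real.exp W * m < ∑ i, b i * w i t) :
    f (S t) ≥ f Sstar / (Real.exp 1 * (m : ℝ) ^ (1 / W) + 1) := by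
  obtain rfl : w = fun i ℓ ↦ packingWeight A b lam (S ℓ) i := funext₂ hw
  change exp W * m < packingPotential A b lam (S t) at hterm
  have hb0 : ∀ i, 0 < b i := fun i ↦ one_pos.trans_le (hb i)
  have hW0 : 0 < W := one_pos.trans_le hW
  have hm : (1 : ℝ) ≤ m := by
    rcases Nat.eq_zero_or_pos m with rfl | hm
    · simp [packingPotential] at hterm
    · exact_mod_cast hm
  have hlam1 : 1 ≤ lam := hlam ▸ one_le_mul_of_one_le_of_one_le (one_le_exp hW0.le) hm
  have hΦ := packingPotential_le_mul_exp_of_greedy_chain hf_submod hf_mono (fun i j ↦ (hA i j).1)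
    hb0 hlam1 hW0 hwidth hfeas (fun ℓ hℓ ↦ by simpa using hchain (ℓ + 1) (by omega) hℓ)
    (fun ℓ hℓ ↦ by simpa using (hδ (ℓ + 1) (by omega) hℓ).le)
    (fun ℓ hℓ ↦ by simpa using hgreedy (ℓ + 1) (by omega) hℓ) hopt
  rw [hS0, packingPotential_empty (fun i ↦ (hb0 i).ne'), hf_norm, Fintype.card_fin,
    sub_zero] at hΦ
  have hL : exp 1 * (m : ℝ) ^ (1 / W) = lam ^ (1 / W) := by
    rw [hlam, mul_rpow (exp_pos W).le (by linarith), ← exp_mul, mul_one_div_cancel hW0.ne']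
  set L := lam ^ (1 / W)
  have hD : 0 < f Sstar - f (S t) := sub_pos.2 hopt
  have hWK : W < (L - 1) * W / (f Sstar - f (S t)) * f (S t) :=
    exp_lt_exp.1 (lt_of_mul_lt_mul_left (by linarith) (by linarith : (0 : ℝ) ≤ m))
  rw [div_mul_eq_mul_div, lt_div_iff₀ hD] at hWK
  rw [hL, ge_iff_le, div_le_iff₀ (by linarith [one_le_rpow hlam1 (one_div_pos.2 hW0).le])]
  nlinarith [hf_nonneg (S t)]

/-- Main approximation lemma for the multiplicative-updates
algorithm with update factor `λ = e^W·m`: if the main loop (greedy selection by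
minimal weight-to-marginal ratio, multiplicative weight updates
`w_{iℓ} = (1/b_i)·λ^{(Σ_{j∈S_ℓ} A_{ij})/b_i}`) terminates with
`Σ_i b_i w_{it} > e^W·m`, and `S*` is feasible with `f(S*) > f(S_t)`, then
`f(S_t) ≥ f(S*) / (e·m^{1/W} + 1)`. -/
theorem stmt_4 (m n t : ℕ) (hm : 1 ≤ m)
    (A : Fin m → Fin n → ℝ) (hA : ∀ i j, 0 ≤ A i j ∧ A i j ≤ 1)
    (b : Fin m → ℝ) (hb : ∀ i, 1 ≤ b i)
    (W : ℝ) (hW : 1 ≤ W) (hwidth : ∀ i j, W * A i j ≤ b i)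
    (f : Finset (Fin n) → ℝ)
    (hf_nonneg : ∀ S, 0 ≤ f S)
    (hf_norm : f ∅ = 0)
    (hf_mono : ∀ S T : Finset (Fin n), S ⊆ T → f S ≤ f T)
    (hf_submod : ∀ S T : Finset (Fin n), f (S ∪ T) + f (S ∩ T) ≤ f S + f T)
    (lam : ℝ) (hlam : lam = Real.exp W * m)
    (S : ℕ → Finset (Fin n)) (γ : ℕ → Fin n)
    (hS0 : S 0 = ∅)
    (hchain : ∀ ℓ, 1 ≤ ℓ → ℓ ≤ t →
      γ ℓ ∉ S (ℓ - 1) ∧ S ℓ = insert (γ ℓ) (S (ℓ - 1)))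
    (w : Fin m → ℕ → ℝ)
    (hw : ∀ i ℓ, w i ℓ = (1 / b i) * lam ^ ((∑ j ∈ S ℓ, A i j) / b i))
    (hδ : ∀ ℓ, 1 ≤ ℓ → ℓ ≤ t → 0 < f (S ℓ) - f (S (ℓ - 1)))
    (hgreedy : ∀ ℓ, 1 ≤ ℓ → ℓ ≤ t → ∀ j : Fin n, j ∉ S (ℓ - 1) →
      (f (insert j (S (ℓ - 1))) - f (S (ℓ - 1))) * ∑ i, A i (γ ℓ) * w i (ℓ - 1)
        ≤ (f (S ℓ) - f (S (ℓ - 1))) * ∑ i, A i j * w i (ℓ - 1))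
    (Sstar : Finset (Fin n))
    (hfeas : ∀ i, ∑ j ∈ Sstar, A i j ≤ b i)
    (hopt : f (S t) < f Sstar)
    (hterm : Real.exp W * m < ∑ i, b i * w i t) :
    f (S t) ≥ f Sstar / (Real.exp 1 * (m : ℝ) ^ (1 / W) + 1) :=
  stmt_4_general m n t A hA b hb W hW hwidth f hf_nonneg hf_norm hf_mono hf_submod lam hlam S γ hS0
    hchain w hw hδ hgreedy Sstar hfeas hopt hterm
end

section
/- Let 0 < ε ≤ 1/4, let m ≥ 1, A ∈ [0,1]^{m×n}, b ∈ [1,∞)^m, and W with W·A_{ij} ≤ b_i for all i, j, W ≥ 1/ε, and m ≤ e^{ε²W}. Let f : 2^[n] → ℝ₊ be a normalized monotone submodular set function and set λ = e^{εW}. Let ∅ = S_0 ⊂ S_1 ⊂ ⋯ ⊂ S_t ⊆ [n] be a chain with S_ℓ = S_{ℓ−1} ∪ {γ_ℓ}, γ_ℓ ∉ S_{ℓ−1}, and define weights w_{iℓ} = (1/b_i)·λ^{(Σ_{j∈S_ℓ} A_{ij})/b_i}. Assume for every ℓ ∈ {1,…,t}: (i) δ_ℓ := f(S_ℓ) − f(S_{ℓ−1})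 > 0, and (ii) f_{S_{ℓ−1}}(j) · Σ_{i=1}^m A_{iγ_ℓ} w_{i(ℓ−1)} ≤ δ_ℓ · Σ_{i=1}^m A_{ij} w_{i(ℓ−1)} for every j ∈ [n]∖S_{ℓ−1}. Let S* ⊆ [n] be feasible (Σ_{j∈S*} A_{ij} ≤ b_i for all i) with f(S*) > f(S_t). If Σ_{i=1}^m b_i w_{it} ≥ e^{ε(W−1)}, then f(S_t) ≥ (1 − 4ε)(1 − 1/e) · f(S*). -/
/-!
Track the potential `Φ_ℓ = ∑ᵢ bᵢ w_{iℓ}` against the residual gap `r_ℓ = f(S*) - f(S_ℓ)`.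
Adding `γ` multiplies `wᵢ` by `exp (ε W Aᵢγ / bᵢ)`, and since the width keeps `W Aᵢγ / bᵢ` in
`[0, 1]`, convexity of `exp` bounds this factor by `1 + (W Aᵢγ / bᵢ)(e^ε - 1)`. So `Φ` grows by
at most `c T` with `c = W (e^ε - 1)` and `T = ∑ᵢ Aᵢγ wᵢ`. Submodularity, the greedy rule and the
feasibility of `S*` give `r_{ℓ-1} T ≤ δ_ℓ Φ_{ℓ-1}`, hence `Φ_ℓ r_ℓ^c ≤ Φ_{ℓ-1} r_{ℓ-1}^c` and
`Φ_t ≤ m (f(S*) / r_t)^c`. Against the termination condition and `m ≤ e^{ε²W}` this forces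
`log (f(S*) / r_t) ≥ 1 - 3ε`, i.e. `r_t ≤ e^{3ε-1} f(S*) ≤ (1 - (1 - 4ε)(1 - 1/e)) f(S*)`.
-/

open Finset Real

lemma exp_mul_le_one_add_mul_exp_sub_one {s : ℝ} (p : ℝ) (hs0 : 0 ≤ s) (hs1 : s ≤ 1) :
    exp (s * p) ≤ 1 + s * (exp p - 1) := by
  have h := convexOn_exp.2 (Set.mem_univ 0) (Set.mem_univ p) (sub_nonneg.2 hs1) hs0 (by ring)
  simp only [smul_eq_mul, mul_zero, zero_add, exp_zero, mul_one] at h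
  linarith

section SetFunction

variable {α ι : Type*} [DecidableEq α] [Fintype ι] {f : Finset α → ℝ}

lemma sub_le_sum_marginal (hf : ∀ S T, f (S ∪ T) + f (S ∩ T) ≤ f S + f T) (X B : Finset α) :
    f (X ∪ B) - f X ≤ ∑ j ∈ B, (f (insert j X) - f X) := by
  induction B using Finset.induction_on with
  | empty => simp
  | insert a B ha ih =>
    have hcup : X ∪ B ∪ insert a X = X ∪ insert a B := by ext; simp; tauto
    have hcap : (X ∪ B) ∩ insert a X = X := by ext x; simp; grind
    have := hf (X ∪ B) (insert a X)
    rw [hcup, hcap] at this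
    rw [sum_insert ha]
    linarith

lemma sub_mul_le_of_greedy (hmono : Monotone f) (hsub : ∀ S T, f (S ∪ T) + f (S ∩ T) ≤ f S + f T)
    {A : ι → α → ℝ} {b v : ι → ℝ} (hA : ∀ i j, 0 ≤ A i j) (hv : ∀ i, 0 ≤ v i)
    {X Y : Finset α} (hY : ∀ i, ∑ j ∈ Y, A i j ≤ b i) {T δ : ℝ} (hT : 0 ≤ T) (hδ : 0 ≤ δ)
    (hgreedy : ∀ j ∉ X, (f (insert j X) - f X) * T ≤ δ * ∑ i, A i j * v i) :
    (f Y - f X) * T ≤ δ * ∑ i, b i * v i := by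
  have hY_le : f Y - f X ≤ ∑ j ∈ Y \ X, (f (insert j X) - f X) := by
    have := hmono (show Y ≤ X ∪ (Y \ X) by simp [subset_union_right])
    linarith [sub_le_sum_marginal hsub X (Y \ X)]
  calc (f Y - f X) * T ≤ ∑ j ∈ Y \ X, (f (insert j X) - f X) * T := by
        rw [← sum_mul]; exact mul_le_mul_of_nonneg_right hY_le hT
    _ ≤ ∑ j ∈ Y \ X, δ * ∑ i, A i j * v i :=
        sum_le_sum fun j hj => hgreedy j (mem_sdiff.1 hj).2
    _ = δ * ∑ i, (∑ j ∈ Y \ X, A i j) * v i := by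
        rw [← mul_sum, sum_comm]; simp_rw [sum_mul]
    _ ≤ δ * ∑ i, b i * v i := by
        refine mul_le_mul_of_nonneg_left (sum_le_sum fun i _ => ?_) hδ
        refine mul_le_mul_of_nonneg_right ((sum_le_sum_of_subset_of_nonneg sdiff_subset
          fun j _ _ => hA i j).trans (hY i)) (hv i)

end SetFunction

lemma mul_exp_mul_log_le_of_step {Φ Φ' T c r r' : ℝ} (hΦ : 0 ≤ Φ) (hc : 0 ≤ c) (hr : 0 < r)
    (hr' : 0 < r') (hΦ' : Φ' ≤ Φ + c * T) (hT : r * T ≤ (r - r') * Φ) :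
    Φ' * exp (c * log r') ≤ Φ * exp (c * log r) := by
  have hlog : (r - r') / r ≤ log r - log r' := by
    have := log_le_sub_one_of_pos (div_pos hr' hr)
    rw [log_div hr'.ne' hr.ne'] at this
    rw [sub_div, div_self hr.ne']
    linarith
  have hstep : Φ' ≤ Φ * exp (c * (log r - log r')) :=
    calc Φ' ≤ Φ + c * T := hΦ'
      _ ≤ Φ * (1 + c * ((r - r') / r)) := by
        have : T ≤ (r - r') / r * Φ := by rw [div_mul_eq_mul_div, le_div_iff₀ hr]; linarith
        nlinarith
      _ ≤ Φ * exp (c * (log r - log r')) := by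
        gcongr
        calc 1 + c * ((r - r') / r) ≤ exp (c * ((r - r') / r)) := by
              linarith [add_one_le_exp (c * ((r - r') / r))]
          _ ≤ exp (c * (log r - log r')) := by gcongr
  calc Φ' * exp (c * log r') ≤ Φ * exp (c * (log r - log r')) * exp (c * log r') := by
        gcongr
    _ = Φ * exp (c * log r) := by rw [mul_assoc, ← exp_add]; ring_nf

noncomputable section Weights

variable {ι α : Type*} (A : ι → α → ℝ) (b : ι → ℝ) (lam : ℝ)

def mwuWeight (X : Finset α) (i : ι) : ℝ := 1 / b i * lam ^ ((∑ j ∈ X, A i j) / b i)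

def mwuPotential [Fintype ι] (X : Finset α) : ℝ := ∑ i, b i * mwuWeight A b lam X i

variable {A b lam}

lemma mwuWeight_nonneg (hb : ∀ i, 0 < b i) (hlam : 0 ≤ lam) (X : Finset α) (i : ι) :
    0 ≤ mwuWeight A b lam X i := by
  have := hb i
  unfold mwuWeight
  positivity

lemma mwuPotential_empty [Fintype ι] (hb : ∀ i, b i ≠ 0) :
    mwuPotential A b lam (∅ : Finset α) = Fintype.card ι := by
  simp [mwuPotential, mwuWeight, hb]

lemma mwuWeight_insert [DecidableEq α] (ε W : ℝ) {X : Finset α} {γ : α} (hγ : γ ∉ X) (i : ι) :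
    mwuWeight A b (exp (ε * W)) (insert γ X) i
      = mwuWeight A b (exp (ε * W)) X i * exp (W * A i γ / b i * ε) := by
  simp only [mwuWeight, sum_insert hγ, ← exp_mul, add_div, mul_add, exp_add]
  ring_nf

lemma mwuPotential_insert_le [Fintype ι] [DecidableEq α] {ε W : ℝ} (hb : ∀ i, 0 < b i)
    (hA : ∀ i j, 0 ≤ A i j) (hW : 0 ≤ W) (hwidth : ∀ i j, W * A i j ≤ b i)
    {X : Finset α} {γ : α} (hγ : γ ∉ X) :
    mwuPotential A b (exp (ε * W)) (insert γ X) ≤ mwuPotential A b (exp (ε * W)) X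
      + W * (exp ε - 1) * ∑ i, A i γ * mwuWeight A b (exp (ε * W)) X i := by
  rw [mwuPotential, mwuPotential, mul_sum, ← sum_add_distrib]
  refine sum_le_sum fun i _ => ?_
  have hbi := hb i
  have hs0 : 0 ≤ W * A i γ / b i := by have := hA i γ; positivity
  have hs1 : W * A i γ / b i ≤ 1 := (div_le_one hbi).2 (hwidth i γ)
  have hv := mwuWeight_nonneg (lam := exp (ε * W)) (A := A) hb (exp_pos _).le X i
  rw [mwuWeight_insert ε W hγ]
  calc b i * (mwuWeight A b (exp (ε * W)) X i * exp (W * A i γ / b i * ε))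
      ≤ b i * (mwuWeight A b (exp (ε * W)) X i * (1 + W * A i γ / b i * (exp ε - 1))) := by
        gcongr
        exact exp_mul_le_one_add_mul_exp_sub_one ε hs0 hs1
    _ = _ := by field_simp

end Weights

lemma mwuPotential_insert_mul_exp_le {ι α : Type*} [Fintype ι] [DecidableEq α]
    {A : ι → α → ℝ} {b : ι → ℝ} {f : Finset α → ℝ} (hmono : Monotone f)
    (hsub : ∀ S T, f (S ∪ T) + f (S ∩ T) ≤ f S + f T) {ε W : ℝ} (hε : 0 ≤ ε)
    (hb : ∀ i, 0 < b i) (hA : ∀ i j, 0 ≤ A i j) (hW : 0 ≤ W) (hwidth : ∀ i j, W * A i j ≤ b i)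
    {X Y : Finset α} (hY : ∀ i, ∑ j ∈ Y, A i j ≤ b i) {γ : α} (hγ : γ ∉ X)
    (hlt : f (insert γ X) < f Y)
    (hgreedy : ∀ j ∉ X, (f (insert j X) - f X) * ∑ i, A i γ * mwuWeight A b (exp (ε * W)) X i
      ≤ (f (insert γ X) - f X) * ∑ i, A i j * mwuWeight A b (exp (ε * W)) X i) :
    mwuPotential A b (exp (ε * W)) (insert γ X)
        * exp (W * (exp ε - 1) * log (f Y - f (insert γ X)))
      ≤ mwuPotential A b (exp (ε * W)) X * exp (W * (exp ε - 1) * log (f Y - f X)) := by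
  have hv := mwuWeight_nonneg (A := A) hb (exp_pos (ε * W)).le X
  refine mul_exp_mul_log_le_of_step (sum_nonneg fun i _ => mul_nonneg (hb i).le (hv i))
    (mul_nonneg hW (by linarith [add_one_le_exp ε]))
    (sub_pos.2 ((hmono (subset_insert γ X)).trans_lt hlt)) (sub_pos.2 hlt)
    (mwuPotential_insert_le hb hA hW hwidth hγ) ?_
  refine (sub_mul_le_of_greedy hmono hsub hA hv hY
    (sum_nonneg fun i _ => mul_nonneg (hA i γ) (hv i))
    (sub_nonneg.2 (hmono (subset_insert γ X))) hgreedy).trans_eq ?_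
  rw [mwuPotential]; ring

lemma mwuPotential_mul_exp_le_of_chain {ι α : Type*} [Fintype ι] [DecidableEq α]
    {A : ι → α → ℝ} {b : ι → ℝ} {f : Finset α → ℝ} (hmono : Monotone f)
    (hsub : ∀ S T, f (S ∪ T) + f (S ∩ T) ≤ f S + f T) {ε W : ℝ} (hε : 0 ≤ ε)
    (hb : ∀ i, 0 < b i) (hA : ∀ i j, 0 ≤ A i j) (hW : 0 ≤ W) (hwidth : ∀ i j, W * A i j ≤ b i)
    {Y : Finset α} (hY : ∀ i, ∑ j ∈ Y, A i j ≤ b i) {S : ℕ → Finset α} {γ : ℕ → α} {t : ℕ}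
    (hchain : ∀ ℓ < t, γ (ℓ + 1) ∉ S ℓ ∧ S (ℓ + 1) = insert (γ (ℓ + 1)) (S ℓ))
    (hgreedy : ∀ ℓ < t, ∀ j ∉ S ℓ,
      (f (insert j (S ℓ)) - f (S ℓ)) * ∑ i, A i (γ (ℓ + 1)) * mwuWeight A b (exp (ε * W)) (S ℓ) i
        ≤ (f (S (ℓ + 1)) - f (S ℓ)) * ∑ i, A i j * mwuWeight A b (exp (ε * W)) (S ℓ) i)
    (hlt : f (S t) < f Y) :
    mwuPotential A b (exp (ε * W)) (S t) * exp (W * (exp ε - 1) * log (f Y - f (S t)))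
      ≤ mwuPotential A b (exp (ε * W)) (S 0) * exp (W * (exp ε - 1) * log (f Y - f (S 0))) := by
  have hS_mono : MonotoneOn S (Set.Iic t) :=
    monotoneOn_of_le_succ Set.ordConnected_Iic fun ℓ _ _ hℓ => by
      rw [Order.succ_eq_add_one] at hℓ ⊢
      rw [(hchain ℓ hℓ).2]
      exact subset_insert _ _
  have hΨ : AntitoneOn (fun ℓ => mwuPotential A b (exp (ε * W)) (S ℓ)
      * exp (W * (exp ε - 1) * log (f Y - f (S ℓ)))) (Set.Iic t) :=
    antitoneOn_of_succ_le Set.ordConnected_Iic fun ℓ _ _ hℓ => by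
      rw [Order.succ_eq_add_one] at hℓ ⊢
      obtain ⟨hγ, hins⟩ := hchain ℓ hℓ
      have hgr := hgreedy ℓ hℓ
      rw [hins] at hgr ⊢
      refine mwuPotential_insert_mul_exp_le hmono hsub hε hb hA hW hwidth hY hγ ?_ hgr
      exact (hins ▸ hmono (hS_mono hℓ (Set.mem_Iic.2 le_rfl) hℓ)).trans_lt hlt
  exact hΨ (Set.mem_Iic.2 (Nat.zero_le t)) (Set.mem_Iic.2 le_rfl) (Nat.zero_le t)

lemma one_sub_three_mul_le {ε W L : ℝ} (hε0 : 0 < ε) (hε1 : ε ≤ 1 / 4) (hεW : 1 ≤ ε * W)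
    (h : ε * (W - 1) ≤ ε ^ 2 * W + W * (exp ε - 1) * L) : 1 - 3 * ε ≤ L := by
  have hW : 0 < W := by nlinarith
  have hexp : (1 - ε) * exp ε ≤ 1 := by
    have := add_one_le_exp (-ε)
    have := mul_le_mul_of_nonneg_right this (exp_pos ε).le
    rwa [← exp_add, neg_add_cancel, exp_zero, neg_add_eq_sub] at this
  have hc : 0 < W * (exp ε - 1) := mul_pos hW (by linarith [add_one_le_exp ε])
  -- `(1 - ε) e^ε ≤ 1` gives `c (1 - 2ε)(1 - ε) ≤ εW - 2ε²W ≤ ε(W - 1) - ε²W`, where `c = W (e^ε - 1)`.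
  have : W * (exp ε - 1) * ((1 - 2 * ε) * (1 - ε)) ≤ W * (exp ε - 1) * L := by
    nlinarith [mul_le_mul_of_nonneg_left hexp (by nlinarith : (0 : ℝ) ≤ W * (1 - 2 * ε))]
  nlinarith [le_of_mul_le_mul_left this hc]

lemma exp_three_mul_sub_one_le {ε : ℝ} (h0 : 0 ≤ ε) (h1 : ε ≤ 1 / 4) :
    exp (3 * ε - 1) ≤ 1 - (1 - 4 * ε) * (1 - 1 / exp 1) := by
  have hchord := exp_mul_le_one_add_mul_exp_sub_one (3 / 4) (by linarith : 0 ≤ 4 * ε)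
    (by linarith)
  have h34 : exp (3 / 4) ≤ exp 1 := exp_le_exp.2 (by norm_num)
  rw [show 4 * ε * (3 / 4) = 3 * ε by ring] at hchord
  rw [exp_sub, div_le_iff₀ (exp_pos 1)]
  field_simp
  nlinarith [mul_le_mul_of_nonneg_left h34 h0]

lemma mul_one_sub_exp_neg_le {F x κ : ℝ} (hF : 0 < F) (hx : x < F)
    (h : κ ≤ log F - log (F - x)) : F * (1 - exp (-κ)) ≤ x := by
  have : F - x ≤ F * exp (-κ) :=
    calc F - x = exp (log (F - x)) := (exp_log (sub_pos.2 hx)).symm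
      _ ≤ exp (log F + -κ) := exp_le_exp.2 (by linarith)
      _ = F * exp (-κ) := by rw [exp_add, exp_log hF]
  linarith

theorem stmt_5_general (m n t : ℕ)
    (ε : ℝ) (hε0 : 0 < ε) (hε1 : ε ≤ 1 / 4)
    (A : Fin m → Fin n → ℝ) (hA : ∀ i j, 0 ≤ A i j ∧ A i j ≤ 1)
    (b : Fin m → ℝ) (hb : ∀ i, 1 ≤ b i)
    (W : ℝ) (hW : 1 / ε ≤ W) (hwidth : ∀ i j, W * A i j ≤ b i)
    (hmW : (m : ℝ) ≤ Real.exp (ε ^ 2 * W))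
    (f : Finset (Fin n) → ℝ)
    (hf_norm : f ∅ = 0)
    (hf_mono : ∀ S T : Finset (Fin n), S ⊆ T → f S ≤ f T)
    (hf_submod : ∀ S T : Finset (Fin n), f (S ∪ T) + f (S ∩ T) ≤ f S + f T)
    (lam : ℝ) (hlam : lam = Real.exp (ε * W))
    (S : ℕ → Finset (Fin n)) (γ : ℕ → Fin n)
    (hS0 : S 0 = ∅)
    (hchain : ∀ ℓ, 1 ≤ ℓ → ℓ ≤ t →
      γ ℓ ∉ S (ℓ - 1) ∧ S ℓ = insert (γ ℓ) (S (ℓ - 1)))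
    (w : Fin m → ℕ → ℝ)
    (hw : ∀ i ℓ, w i ℓ = (1 / b i) * lam ^ ((∑ j ∈ S ℓ, A i j) / b i))
    (hgreedy : ∀ ℓ, 1 ≤ ℓ → ℓ ≤ t → ∀ j : Fin n, j ∉ S (ℓ - 1) →
      (f (insert j (S (ℓ - 1))) - f (S (ℓ - 1))) * ∑ i, A i (γ ℓ) * w i (ℓ - 1)
        ≤ (f (S ℓ) - f (S (ℓ - 1))) * ∑ i, A i j * w i (ℓ - 1))
    (Sstar : Finset (Fin n))
    (hfeas : ∀ i, ∑ j ∈ Sstar, A i j ≤ b i)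
    (hopt : f (S t) < f Sstar)
    (hterm : Real.exp (ε * (W - 1)) ≤ ∑ i, b i * w i t) :
    f (S t) ≥ (1 - 4 * ε) * (1 - 1 / Real.exp 1) * f Sstar := by
  have hεW : 1 ≤ ε * W := by rwa [div_le_iff₀ hε0, mul_comm] at hW
  have hbpos : ∀ i, 0 < b i := fun i => one_pos.trans_le (hb i)
  have hw' : ∀ i ℓ, w i ℓ = mwuWeight A b (exp (ε * W)) (S ℓ) i := fun i ℓ => by
    rw [hw, hlam, mwuWeight]
  simp only [hw'] at hgreedy hterm
  have hpot := mwuPotential_mul_exp_le_of_chain hf_mono hf_submod hε0.le hbpos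
    (fun i j => (hA i j).1) (by nlinarith) hwidth hfeas
    (fun ℓ hℓ => by simpa using hchain (ℓ + 1) le_add_self hℓ)
    (fun ℓ hℓ => by simpa using hgreedy (ℓ + 1) le_add_self hℓ) hopt
  simp only [hS0, hf_norm, sub_zero, mwuPotential_empty fun i => (hbpos i).ne',
    Fintype.card_fin] at hpot
  set c := W * (exp ε - 1)
  have hlogs : ε * (W - 1) ≤ ε ^ 2 * W + c * (log (f Sstar) - log (f Sstar - f (S t))) := by
    suffices exp (ε * (W - 1) + c * log (f Sstar - f (S t)))
        ≤ exp (ε ^ 2 * W + c * log (f Sstar)) by linarith [exp_le_exp.1 this]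
    rw [exp_add, exp_add]
    calc exp (ε * (W - 1)) * exp (c * log (f Sstar - f (S t)))
        ≤ mwuPotential A b (exp (ε * W)) (S t) * exp (c * log (f Sstar - f (S t))) := by
          gcongr; exact hterm
      _ ≤ m * exp (c * log (f Sstar)) := hpot
      _ ≤ exp (ε ^ 2 * W) * exp (c * log (f Sstar)) := by gcongr
  have hF : 0 < f Sstar := (hf_norm ▸ hf_mono _ _ (empty_subset (S t))).trans_lt hopt
  have := mul_one_sub_exp_neg_le hF hopt (one_sub_three_mul_le hε0 hε1 hεW hlogs)
  rw [neg_sub] at this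
  nlinarith [exp_three_mul_sub_one_le hε0.le hε1]

/-- Large-width approximation lemma for the multiplicative-updates
algorithm with update factor `λ = e^{εW}`: with `0 < ε ≤ 1/4`, `W ≥ 1/ε`,
`m ≤ e^{ε²W}`, if the loop terminates with `Σ_i b_i w_{it} ≥ e^{ε(W−1)}` and `S*`
is feasible with `f(S*) > f(S_t)`, then `f(S_t) ≥ (1 − 4ε)(1 − 1/e)·f(S*)`. -/
theorem stmt_5 (m n t : ℕ) (hm : 1 ≤ m)
    (ε : ℝ) (hε0 : 0 < ε) (hε1 : ε ≤ 1 / 4)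
    (A : Fin m → Fin n → ℝ) (hA : ∀ i j, 0 ≤ A i j ∧ A i j ≤ 1)
    (b : Fin m → ℝ) (hb : ∀ i, 1 ≤ b i)
    (W : ℝ) (hW : 1 / ε ≤ W) (hwidth : ∀ i j, W * A i j ≤ b i)
    (hmW : (m : ℝ) ≤ Real.exp (ε ^ 2 * W))
    (f : Finset (Fin n) → ℝ)
    (hf_nonneg : ∀ S, 0 ≤ f S)
    (hf_norm : f ∅ = 0)
    (hf_mono : ∀ S T : Finset (Fin n), S ⊆ T → f S ≤ f T)
    (hf_submod : ∀ S T : Finset (Fin n), f (S ∪ T) + f (S ∩ T) ≤ f S + f T)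
    (lam : ℝ) (hlam : lam = Real.exp (ε * W))
    (S : ℕ → Finset (Fin n)) (γ : ℕ → Fin n)
    (hS0 : S 0 = ∅)
    (hchain : ∀ ℓ, 1 ≤ ℓ → ℓ ≤ t →
      γ ℓ ∉ S (ℓ - 1) ∧ S ℓ = insert (γ ℓ) (S (ℓ - 1)))
    (w : Fin m → ℕ → ℝ)
    (hw : ∀ i ℓ, w i ℓ = (1 / b i) * lam ^ ((∑ j ∈ S ℓ, A i j) / b i))
    (hδ : ∀ ℓ, 1 ≤ ℓ → ℓ ≤ t → 0 < f (S ℓ) - f (S (ℓ - 1)))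
    (hgreedy : ∀ ℓ, 1 ≤ ℓ → ℓ ≤ t → ∀ j : Fin n, j ∉ S (ℓ - 1) →
      (f (insert j (S (ℓ - 1))) - f (S (ℓ - 1))) * ∑ i, A i (γ ℓ) * w i (ℓ - 1)
        ≤ (f (S ℓ) - f (S (ℓ - 1))) * ∑ i, A i j * w i (ℓ - 1))
    (Sstar : Finset (Fin n))
    (hfeas : ∀ i, ∑ j ∈ Sstar, A i j ≤ b i)
    (hopt : f (S t) < f Sstar)
    (hterm : Real.exp (ε * (W - 1)) ≤ ∑ i, b i * w i t) :
    f (S t) ≥ (1 - 4 * ε) * (1 - 1 / Real.exp 1) * f Sstar :=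
  stmt_5_general m n t ε hε0 hε1 A hA b hb W hW hwidth hmW f hf_norm hf_mono hf_submod lam hlam S γ
    hS0 hchain w hw hgreedy Sstar hfeas hopt hterm
end

section
/- Let f : 2^[n] → ℝ₊ be a normalized monotone submodular set function, let e_1, …, e_n be an enumeration of [n], write E_t = {e_1, …, e_t} (with E_0 = ∅), and let S ⊆ [n]. Assume the enumeration is greedy with respect to S: for every t ∈ [n] and every j ∈ [n]∖E_{t−1}, f_{S∩E_{t−1}}(e_t) ≥ f_{S∩E_{t−1}}(j). Let 0 < α ≤ 1 and let S* ⊆ [n] satisfy |S ∩ E_t| ≥ α·|S* ∩ E_t| for every t ∈ [n]. Then f(S) ≥ (α/(α+1)) · f(S*). -/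
/-!
Let `m t` be the marginal value of the greedy element `e_{t+1}` with respect to `S ∩ E_t`.
Greediness and submodularity make `m` nonincreasing, and telescoping gives
`f(S) = ∑_{e_{t+1} ∈ S} m t`. Submodularity also bounds
`f(S*) ≤ f(S ∪ S*) ≤ f(S) + ∑_{e_{t+1} ∈ S* \ S} m t`. The prefix counts
`|S ∩ E_t| - α |(S* \ S) ∩ E_t|` are nonnegative, so Abel summation against the nonincreasing,
nonnegative weights `m` gives `α ∑_{e_{t+1} ∈ S* \ S} m t ≤ f(S)`, hence `α f(S*) ≤ (1 + α) f(S)`.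
-/

open Finset

theorem sum_range_mul_nonneg_of_antitoneOn {R : Type*} [CommRing R] [PartialOrder R]
    [IsOrderedRing R] {m c : ℕ → R} {N : ℕ} (hm : AntitoneOn m (Set.Iio N))
    (hm0 : ∀ t < N, 0 ≤ m t) (hc : ∀ t, 1 ≤ t → t ≤ N → 0 ≤ ∑ s ∈ range t, c s) :
    0 ≤ ∑ s ∈ range N, m s * c s := by
  rcases N.eq_zero_or_pos with rfl | hN
  · simp
  have hparts := sum_range_by_parts m c N
  simp only [smul_eq_mul] at hparts
  rw [hparts]
  have hlast : 0 ≤ m (N - 1) * ∑ s ∈ range N, c s :=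
    mul_nonneg (hm0 _ (by omega)) (hc N hN le_rfl)
  have hsteps : ∑ i ∈ range (N - 1), (m (i + 1) - m i) * ∑ s ∈ range (i + 1), c s ≤ 0 := by
    refine sum_nonpos fun i hi => mul_nonpos_of_nonpos_of_nonneg ?_ (hc _ le_add_self ?_)
    · rw [mem_range] at hi
      exact sub_nonpos.2 (hm (Set.mem_Iio.2 (by omega)) (Set.mem_Iio.2 (by omega)) (Nat.le_succ i))
    · rw [mem_range] at hi
      omega
  exact sub_nonneg.2 (hsteps.trans hlast)

section GreedyEnumeration

variable {ι : Type*} [DecidableEq ι]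

theorem sum_eq_sum_range_ite {M : Type*} [AddCommMonoid M] {e : ℕ → ι} {N : ℕ}
    (he : Set.InjOn e (range N)) {A : Finset ι} (hA : A ⊆ (range N).image e) (g : ι → M) :
    ∑ j ∈ A, g j = ∑ s ∈ range N, if e s ∈ A then g (e s) else 0 := by
  rw [← sum_filter, ← sum_image (he.mono (coe_subset.2 (filter_subset _ _))),
    ← filter_image (p := (· ∈ A)), filter_mem_eq_inter, inter_eq_right.2 hA]

theorem card_inter_image_range {R : Type*} [AddCommMonoidWithOne R] {e : ℕ → ι} {t : ℕ}
    (he : Set.InjOn e (range t)) (A : Finset ι) :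
    (#(A ∩ (range t).image e) : R) = ∑ s ∈ range t, if e s ∈ A then 1 else 0 := by
  rw [card_eq_sum_ones, Nat.cast_sum, sum_eq_sum_range_ite he inter_subset_right]
  refine sum_congr rfl fun s hs => ?_
  simp [mem_image_of_mem e hs]

theorem mul_sum_ite_le_sum_ite {e : ℕ → ι} {N : ℕ}
    (he : Set.InjOn e (range N)) {m : ℕ → ℝ} (hm : AntitoneOn m (Set.Iio N))
    (hm0 : ∀ t < N, 0 ≤ m t) {A B : Finset ι} {α : ℝ}
    (hcard : ∀ t, 1 ≤ t → t ≤ N →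
      α * (#(A ∩ (range t).image e) : ℝ) ≤ #(B ∩ (range t).image e)) :
    α * ∑ s ∈ range N, (if e s ∈ A then m s else 0) ≤
      ∑ s ∈ range N, if e s ∈ B then m s else 0 := by
  set c : ℕ → ℝ := fun s => (if e s ∈ B then 1 else 0) - α * if e s ∈ A then 1 else 0
  have hc : ∀ t, 1 ≤ t → t ≤ N → 0 ≤ ∑ s ∈ range t, c s := by
    intro t ht1 htN
    have het := he.mono (coe_subset.2 (range_subset_range.2 htN))
    rw [sum_sub_distrib, ← mul_sum, ← card_inter_image_range het, ← card_inter_image_range het]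
    exact sub_nonneg.2 (hcard t ht1 htN)
  rw [mul_sum, ← sub_nonneg, ← sum_sub_distrib]
  refine (sum_range_mul_nonneg_of_antitoneOn hm hm0 hc).trans_eq (sum_congr rfl fun s _ => ?_)
  simp only [c]
  split_ifs <;> ring

variable (f : Finset ι → ℝ)

def marginal (S : Finset ι) (j : ι) : ℝ := f (insert j S) - f S

variable {f}

theorem marginal_le_marginal_of_subset_s7
    (hsub : ∀ S T : Finset ι, f (S ∪ T) + f (S ∩ T) ≤ f S + f T)
    {A B : Finset ι} (hAB : A ⊆ B) {x : ι} (hx : x ∉ B) :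
    marginal f B x ≤ marginal f A x := by
  have := hsub (insert x A) B
  rw [insert_union, union_eq_right.2 hAB, insert_inter_of_notMem hx, inter_eq_left.2 hAB] at this
  unfold marginal
  linarith

theorem le_add_sum_marginal (hsub : ∀ S T : Finset ι, f (S ∪ T) + f (S ∩ T) ≤ f S + f T)
    (S T : Finset ι) : f (S ∪ T) ≤ f S + ∑ j ∈ T \ S, marginal f S j := by
  induction T using Finset.induction_on with
  | empty => simp
  | insert x T hxT ih =>
    by_cases hxS : x ∈ S
    · rwa [union_insert, insert_eq_of_mem (mem_union_left T hxS), insert_sdiff_of_mem _ hxS]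
    · have hx : x ∉ S ∪ T := by simp [hxS, hxT]
      have := marginal_le_marginal_of_subset_s7 hsub subset_union_left hx
      rw [union_insert, insert_sdiff_of_notMem _ hxS,
        sum_insert fun h => hxT (mem_sdiff.1 h).1]
      unfold marginal at this ih ⊢
      linarith

variable (f) (S : Finset ι) (e : ℕ → ι)

/-- The paper's `f_{S ∩ E_t}(e_{t+1})`: the enumeration is indexed from `0`, so
`E_t = e '' [0, t)`. -/
def greedyMarginal (t : ℕ) : ℝ := marginal f (S ∩ (range t).image e) (e t)

variable {f S e}

theorem greedyMarginal_nonneg (hmono : ∀ S T : Finset ι, S ⊆ T → f S ≤ f T) (t : ℕ) :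
    0 ≤ greedyMarginal f S e t :=
  sub_nonneg.2 (hmono _ _ (subset_insert _ _))

theorem greedyMarginal_antitoneOn
    (hsub : ∀ S T : Finset ι, f (S ∪ T) + f (S ∩ T) ≤ f S + f T) {N : ℕ}
    (he : Set.InjOn e (range N))
    (hgreedy : ∀ t < N, ∀ j, j ∉ (range t).image e →
      marginal f (S ∩ (range t).image e) j ≤ greedyMarginal f S e t) :
    AntitoneOn (greedyMarginal f S e) (Set.Iio N) := by
  intro s hs t ht hst
  rw [Set.mem_Iio] at hs ht
  have hnew : ∀ u ≤ t, e t ∉ (range u).image e := by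
    intro u hu h
    obtain ⟨v, hv, hvt⟩ := mem_image.1 h
    rw [mem_range] at hv
    have := he (mem_range.2 (by omega)) (mem_range.2 ht) hvt
    omega
  calc greedyMarginal f S e t ≤ marginal f (S ∩ (range s).image e) (e t) :=
        marginal_le_marginal_of_subset_s7 hsub
          (inter_subset_inter_left (image_subset_image (range_subset_range.2 hst)))
          fun h => hnew t le_rfl (mem_inter.1 h).2
    _ ≤ greedyMarginal f S e s := hgreedy s hs (e t) (hnew s hst)

theorem sub_empty_eq_sum_greedyMarginal (t : ℕ) :
    f (S ∩ (range t).image e) - f ∅ =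
      ∑ s ∈ range t, if e s ∈ S then greedyMarginal f S e s else 0 := by
  have hstep : ∀ s, f (S ∩ (range (s + 1)).image e) - f (S ∩ (range s).image e) =
      if e s ∈ S then greedyMarginal f S e s else 0 := by
    intro s
    rw [range_add_one, image_insert]
    split_ifs with hs
    · rw [inter_insert_of_mem hs]
      rfl
    · rw [inter_insert_of_notMem hs, sub_self]
  rw [← sum_congr rfl fun s _ => hstep s, sum_range_sub fun s => f (S ∩ (range s).image e)]
  simp

theorem le_add_sum_greedyMarginal (hmono : ∀ S T : Finset ι, S ⊆ T → f S ≤ f T)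
    (hsub : ∀ S T : Finset ι, f (S ∪ T) + f (S ∩ T) ≤ f S + f T) {N : ℕ}
    (he : Set.InjOn e (range N)) {T : Finset ι} (hT : T ⊆ (range N).image e) :
    f T ≤ f S + ∑ s ∈ range N, if e s ∈ T \ S then greedyMarginal f S e s else 0 := calc
  f T ≤ f (S ∪ T) := hmono _ _ subset_union_right
  _ ≤ f S + ∑ j ∈ T \ S, marginal f S j := le_add_sum_marginal hsub S T
  _ = f S + ∑ s ∈ range N, if e s ∈ T \ S then marginal f S (e s) else 0 := by
    rw [sum_eq_sum_range_ite he (sdiff_subset.trans hT)]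
  _ ≤ _ := by
    refine (add_le_add_iff_left _).2 (sum_le_sum fun s _ => ?_)
    split_ifs with hs
    · exact marginal_le_marginal_of_subset_s7 hsub inter_subset_left (mem_sdiff.1 hs).2
    · rfl

end GreedyEnumeration

theorem stmt_7_general (n : ℕ) (f : Finset (Fin n) → ℝ)
    (hf_norm : f ∅ = 0)
    (hf_mono : ∀ S T : Finset (Fin n), S ⊆ T → f S ≤ f T)
    (hf_submod : ∀ S T : Finset (Fin n), f (S ∪ T) + f (S ∩ T) ≤ f S + f T)
    (e : ℕ → Fin n) (hinj : ∀ s < n, ∀ t < n, e s = e t → s = t)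
    (E : ℕ → Finset (Fin n)) (hE : ∀ t, E t = (Finset.range t).image e)
    (S : Finset (Fin n))
    (hgreedy : ∀ t < n, ∀ j : Fin n, j ∉ E t →
      f (insert j (S ∩ E t)) - f (S ∩ E t)
        ≤ f (insert (e t) (S ∩ E t)) - f (S ∩ E t))
    (α : ℝ) (hα0 : 0 < α)
    (Sstar : Finset (Fin n))
    (hcard : ∀ t, 1 ≤ t → t ≤ n →
      α * ((Sstar ∩ E t).card : ℝ) ≤ ((S ∩ E t).card : ℝ)) :
    f S ≥ (α / (α + 1)) * f Sstar := by
  obtain rfl : E = fun t => (range t).image e := funext hE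
  have he : Set.InjOn e (range n) := fun s hs t ht => hinj s (mem_range.1 hs) t (mem_range.1 ht)
  have hcover : (range n).image e = univ :=
    eq_univ_of_card _ (by rw [card_image_of_injOn he, card_range, Fintype.card_fin])
  have hfS : f S = ∑ s ∈ range n, if e s ∈ S then greedyMarginal f S e s else 0 := by
    simpa [hcover, hf_norm] using sub_empty_eq_sum_greedyMarginal (f := f) (S := S) (e := e) n
  have hSstar :=
    le_add_sum_greedyMarginal (S := S) hf_mono hf_submod he (hcover ▸ subset_univ Sstar)
  have hweighted : α * ∑ s ∈ range n,
      (if e s ∈ Sstar \ S then greedyMarginal f S e s else 0) ≤ f S := by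
    rw [hfS]
    refine mul_sum_ite_le_sum_ite he (greedyMarginal_antitoneOn hf_submod he hgreedy)
      (fun t _ => greedyMarginal_nonneg hf_mono t) fun t ht1 htn => ?_
    calc α * (#((Sstar \ S) ∩ (range t).image e) : ℝ)
        ≤ α * #(Sstar ∩ (range t).image e) := by gcongr; exact sdiff_subset
      _ ≤ _ := hcard t ht1 htn
  rw [ge_iff_le, div_mul_eq_mul_div, div_le_iff₀ (by positivity)]
  linarith [mul_le_mul_of_nonneg_left hSstar hα0.le]

/-- Let `f : 2^[n] → ℝ₊` be a normalized monotone submodular set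
function, let `e_1, …, e_n` be an enumeration of `[n]` (here `e 0, …, e (n-1)`),
`E t = {e_1,…,e_t}`, and `S ⊆ [n]`. If the enumeration is greedy with respect to
`S` (each `e_t` maximizes the marginal value with respect to `S ∩ E_{t−1}` among
remaining elements), `0 < α ≤ 1`, and `|S ∩ E_t| ≥ α·|S* ∩ E_t|` for every
`t ∈ [n]`, then `f(S) ≥ (α/(α+1))·f(S*)`. -/
theorem stmt_7 (n : ℕ) (f : Finset (Fin n) → ℝ)
    (hf_nonneg : ∀ S, 0 ≤ f S)
    (hf_norm : f ∅ = 0)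
    (hf_mono : ∀ S T : Finset (Fin n), S ⊆ T → f S ≤ f T)
    (hf_submod : ∀ S T : Finset (Fin n), f (S ∪ T) + f (S ∩ T) ≤ f S + f T)
    (e : ℕ → Fin n) (hinj : ∀ s < n, ∀ t < n, e s = e t → s = t)
    (E : ℕ → Finset (Fin n)) (hE : ∀ t, E t = (Finset.range t).image e)
    (S : Finset (Fin n))
    (hgreedy : ∀ t < n, ∀ j : Fin n, j ∉ E t →
      f (insert j (S ∩ E t)) - f (S ∩ E t)
        ≤ f (insert (e t) (S ∩ E t)) - f (S ∩ E t))
    (α : ℝ) (hα0 : 0 < α) (hα1 : α ≤ 1)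
    (Sstar : Finset (Fin n))
    (hcard : ∀ t, 1 ≤ t → t ≤ n →
      α * ((Sstar ∩ E t).card : ℝ) ≤ ((S ∩ E t).card : ℝ)) :
    f S ≥ (α / (α + 1)) * f Sstar :=
  stmt_7_general n f hf_norm hf_mono hf_submod e hinj E hE S hgreedy α hα0 Sstar hcard
end

section
/- Let A ∈ {0,1}^{m×n} be a binary matrix, b ∈ ℕ₊^m a vector of positive integers, W ≥ 1 with W ≤ b_i for all i ∈ [m], λ > 1, and suppose every column of A has at most k nonzero entries (Σ_{i=1}^m A_{ij} ≤ k for every j ∈ [n]). Let ∅ = S_0 ⊂ S_1 ⊂ ⋯ ⊂ S_t ⊆ [n] be a chain with S_ℓ = S_{ℓ−1} ∪ {γ_ℓ}, γ_ℓ ∉ S_{ℓ−1}, and define weights w_{iℓ} = λ^{(Σ_{j∈S_ℓ} A_{ij})/b_i} − 1 (so w_{i0} = 0). If Σ_{i=1}^m A_{iγ_ℓ} w_{i(ℓ−1)} < λ − 1 for every ℓ ∈ {1,…,t}, then t ≥ (Σ_{i=1}^m b_i w_{it}) / (W·λ^{1/W}·(k + λ − 1)). -/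
/-!
The potential `Φ_ℓ = Σ_i b_i w_{iℓ}` grows by at most `W λ^{1/W} (k + λ - 1)` per selected column.
Adding `γ_ℓ` multiplies `w_{i} + 1` by `λ^{1/b_i}` in each row it covers, so
`Δ(b_i w_i) = (w_i + 1) · b_i (λ^{1/b_i} - 1) ≤ (w_i + 1) · W λ^{1/W}`, since `B (λ^{1/B} - 1)` is
antitone in `B` (convexity of `x ↦ λ^x`). Summing over the at most `k` rows covered by `γ_ℓ`
and using the selection rule `Σ_i A_{iγ_ℓ} w_i < λ - 1` bounds the increase; telescoping over
`t` steps gives the claim.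
-/

open Finset

theorem mul_rpow_one_div_sub_one_le_of_le {lam W B : ℝ} (hlam : 0 < lam) (hW : 0 < W)
    (hWB : W ≤ B) : B * (lam ^ (1 / B) - 1) ≤ W * (lam ^ (1 / W) - 1) := by
  have hB : 0 < B := hW.trans_le hWB
  have := (convexOn_rpow_left hlam).secant_mono (a := 0) (x := 1 / B) (y := 1 / W)
    trivial trivial trivial (by positivity) (by positivity) (one_div_le_one_div_of_le hW hWB)
  simpa [Real.rpow_zero, mul_comm] using this

section Weight

variable {ι α : Type*}

noncomputable def weight (lam : ℝ) (A : ι → α → ℝ) (b : ι → ℝ) (s : Finset α) (i : ι) : ℝ :=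
  lam ^ ((∑ j ∈ s, A i j) / b i) - 1

variable {lam W : ℝ} {A : ι → α → ℝ} {b : ι → ℝ} {s : Finset α} {j : α}

theorem weight_empty (i : ι) : weight lam A b ∅ i = 0 := by
  simp [weight]

theorem mul_weight_insert_le [DecidableEq α] (hlam : 0 < lam) (hW : 0 < W) {i : ι} (hWb : W ≤ b i)
    (hA : A i j = 0 ∨ A i j = 1) (hj : j ∉ s) :
    b i * weight lam A b (insert j s) i ≤
      b i * weight lam A b s i + W * lam ^ (1 / W) * (A i j * (weight lam A b s i + 1)) := by
  set x := (∑ j ∈ s, A i j) / b i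
  have hx : 0 < lam ^ x := Real.rpow_pos_of_pos hlam x
  rcases hA with h | h
  · simp [weight, sum_insert hj, h]
  · have hsplit : (∑ j ∈ insert j s, A i j) / b i = 1 / b i + x := by
      rw [sum_insert hj, h, add_div]
    have hmono := mul_rpow_one_div_sub_one_le_of_le hlam hW hWb
    have hpos : 0 ≤ lam ^ (1 / W) := by positivity
    simp only [weight, hsplit, Real.rpow_add hlam, h, one_mul, sub_add_cancel]
    nlinarith [mul_le_mul_of_nonneg_right hmono hx.le]

theorem sum_mul_weight_insert_le [Fintype ι] [DecidableEq α] (hlam : 0 < lam) (hW : 0 < W)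
    (hWb : ∀ i, W ≤ b i) (hA : ∀ i, A i j = 0 ∨ A i j = 1) (hj : j ∉ s) {k : ℝ}
    (hk : ∑ i, A i j ≤ k)
    (hsel : ∑ i, A i j * weight lam A b s i < lam - 1) :
    ∑ i, b i * weight lam A b (insert j s) i ≤
      ∑ i, b i * weight lam A b s i + W * lam ^ (1 / W) * (k + lam - 1) := by
  have hload : ∑ i, A i j * (weight lam A b s i + 1) ≤ k + lam - 1 := by
    simp only [mul_add_one, sum_add_distrib]
    linarith
  calc ∑ i, b i * weight lam A b (insert j s) i
      ≤ ∑ i, (b i * weight lam A b s i + W * lam ^ (1 / W) * (A i j * (weight lam A b s i + 1))) :=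
        sum_le_sum fun i _ => mul_weight_insert_le hlam hW (hWb i) (hA i) hj
    _ = ∑ i, b i * weight lam A b s i +
          W * lam ^ (1 / W) * ∑ i, A i j * (weight lam A b s i + 1) := by
        rw [sum_add_distrib, mul_sum]
    _ ≤ _ := by gcongr

end Weight

theorem stmt_8_general (m n t : ℕ)
    (A : Fin m → Fin n → ℝ) (hA : ∀ i j, A i j = 0 ∨ A i j = 1)
    (b : Fin m → ℕ)
    (W : ℝ) (hW : 1 ≤ W) (hwidth : ∀ i, W ≤ (b i : ℝ))
    (lam : ℝ) (hlam : 1 < lam)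
    (k : ℝ) (hsparse : ∀ j, ∑ i, A i j ≤ k)
    (S : ℕ → Finset (Fin n)) (γ : ℕ → Fin n)
    (hS0 : S 0 = ∅)
    (hchain : ∀ ℓ, 1 ≤ ℓ → ℓ ≤ t →
      γ ℓ ∉ S (ℓ - 1) ∧ S ℓ = insert (γ ℓ) (S (ℓ - 1)))
    (w : Fin m → ℕ → ℝ)
    (hw : ∀ i ℓ, w i ℓ = lam ^ ((∑ j ∈ S ℓ, A i j) / (b i : ℝ)) - 1)
    (hsel : ∀ ℓ, 1 ≤ ℓ → ℓ ≤ t → ∑ i, A i (γ ℓ) * w i (ℓ - 1) < lam - 1) :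
    (t : ℝ) ≥ (∑ i, (b i : ℝ) * w i t) / (W * lam ^ (1 / W) * (k + lam - 1)) := by
  obtain rfl : w = fun i ℓ => weight lam A (fun i => (b i : ℝ)) (S ℓ) i := funext₂ hw
  clear hw
  set Φ : ℕ → ℝ := fun ℓ => ∑ i, (b i : ℝ) * weight lam A (fun i => (b i : ℝ)) (S ℓ) i
  set C := W * lam ^ (1 / W) * (k + lam - 1)
  have hk : 0 ≤ k := (sum_nonneg fun i _ => by rcases hA i (γ 0) with h | h <;> simp [h]).trans
    (hsparse (γ 0))
  have hC : 0 < C := mul_pos (by positivity) (by linarith)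
  have hstep : ∀ ℓ < t, Φ (ℓ + 1) - Φ ℓ ≤ C := by
    intro ℓ hℓ
    obtain ⟨hγ, hS⟩ := hchain (ℓ + 1) ℓ.succ_pos hℓ
    have hsel := hsel (ℓ + 1) ℓ.succ_pos hℓ
    simp only [Nat.add_sub_cancel] at hγ hS hsel
    have := sum_mul_weight_insert_le (by linarith) (by linarith) hwidth (hA · (γ (ℓ + 1))) hγ
      (hsparse _) hsel
    simp only [Φ, C, hS]
    linarith
  rw [ge_iff_le, div_le_iff₀ hC]
  calc Φ t
      _ = ∑ ℓ ∈ range t, (Φ (ℓ + 1) - Φ ℓ) := by simp [sum_range_sub Φ, Φ, hS0, weight_empty]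
      _ ≤ ∑ ℓ ∈ range t, C := sum_le_sum fun ℓ hℓ => hstep ℓ (mem_range.mp hℓ)
      _ = t * C := by simp

/-- In the binary `k`-column-sparse setting, with weights
`w_{iℓ} = λ^{(Σ_{j∈S_ℓ} A_{ij})/b_i} − 1`, if every selected element `γ_ℓ`
satisfies `Σ_i A_{iγ_ℓ} w_{i(ℓ−1)} < λ − 1`, then
`t ≥ (Σ_i b_i w_{it}) / (W·λ^{1/W}·(k + λ − 1))`. -/
theorem stmt_8 (m n t : ℕ)
    (A : Fin m → Fin n → ℝ) (hA : ∀ i j, A i j = 0 ∨ A i j = 1)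
    (b : Fin m → ℕ) (hb : ∀ i, 1 ≤ b i)
    (W : ℝ) (hW : 1 ≤ W) (hwidth : ∀ i, W ≤ (b i : ℝ))
    (lam : ℝ) (hlam : 1 < lam)
    (k : ℝ) (hsparse : ∀ j, ∑ i, A i j ≤ k)
    (S : ℕ → Finset (Fin n)) (γ : ℕ → Fin n)
    (hS0 : S 0 = ∅)
    (hchain : ∀ ℓ, 1 ≤ ℓ → ℓ ≤ t →
      γ ℓ ∉ S (ℓ - 1) ∧ S ℓ = insert (γ ℓ) (S (ℓ - 1)))
    (w : Fin m → ℕ → ℝ)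
    (hw : ∀ i ℓ, w i ℓ = lam ^ ((∑ j ∈ S ℓ, A i j) / (b i : ℝ)) - 1)
    (hsel : ∀ ℓ, 1 ≤ ℓ → ℓ ≤ t → ∑ i, A i (γ ℓ) * w i (ℓ - 1) < lam - 1) :
    (t : ℝ) ≥ (∑ i, (b i : ℝ) * w i t) / (W * lam ^ (1 / W) * (k + lam - 1)) :=
  stmt_8_general m n t A hA b W hW hwidth lam hlam k hsparse S γ hS0 hchain w hw hsel
end

section
/- Let A ∈ {0,1}^{m×n} be a binary matrix, b ∈ ℕ₊^m a vector of positive integers, W ≥ 1 with W ≤ b_i for all i ∈ [m], and λ > 1. Let S ⊆ [n], ℓ ∈ [n]∖S, set w_i = λ^{(Σ_{j∈S} A_{ij})/b_i} − 1 and w'_i = λ^{(Σ_{j∈S∪{ℓ}} A_{ij})/b_i} − 1. If Σ_{i=1}^m A_{iℓ} w_i < λ − 1 and Σ_{i=1}^m A_{iℓ} ≤ k, then Σ_{i=1}^m b_i (w'_i − w_i) < W·λ^{1/W}·(k + λ − 1). -/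
/-! The increment of row `i` is `b_i (λ^{A_{iℓ}/b_i} - 1) (w_i + 1)`. Bernoulli's inequality
`x^t ≤ 1 + t (x - 1)` for `x = λ^{1/W}` and `t = W / b_i ≤ 1` bounds `b_i (λ^{1/b_i} - 1)` by
`W (λ^{1/W} - 1)`, so the total increase is at most `W (λ^{1/W} - 1) Σ_i A_{iℓ} (w_i + 1)`, and
the two hypotheses give `Σ_i A_{iℓ} (w_i + 1) < (λ - 1) + k`. -/

open Finset Real

lemma mul_rpow_one_div_sub_one_le {lam W b : ℝ} (hlam : 1 ≤ lam) (hW : 0 < W) (hWb : W ≤ b) :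
    b * (lam ^ (1 / b) - 1) ≤ W * (lam ^ (1 / W) - 1) := by
  have hb : 0 < b := hW.trans_le hWb
  have hbase : 1 ≤ lam ^ (1 / W) := one_le_rpow hlam (by positivity)
  have hpow : lam ^ (1 / b) = (lam ^ (1 / W)) ^ (W / b) := by
    rw [← rpow_mul (by linarith)]
    congr 1
    field_simp
  have hbernoulli : (1 + (lam ^ (1 / W) - 1)) ^ (W / b) ≤ 1 + W / b * (lam ^ (1 / W) - 1) :=
    rpow_one_add_le_one_add_mul_self (by linarith) (by positivity) ((div_le_one hb).2 hWb)
  rw [add_sub_cancel, ← hpow] at hbernoulli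
  calc b * (lam ^ (1 / b) - 1) ≤ b * (W / b * (lam ^ (1 / W) - 1)) := by gcongr; linarith
    _ = W * (lam ^ (1 / W) - 1) := by field_simp

lemma mul_rpow_add_div_sub_rpow_div_le {lam W b a s : ℝ} (hlam : 1 ≤ lam) (hW : 0 < W)
    (hWb : W ≤ b) (ha : a = 0 ∨ a = 1) :
    b * (lam ^ ((a + s) / b) - lam ^ (s / b)) ≤ a * lam ^ (s / b) * (W * (lam ^ (1 / W) - 1)) := by
  rcases ha with rfl | rfl
  · simp
  · have hb : 0 < b := hW.trans_le hWb
    rw [add_div, rpow_add (by linarith), one_mul]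
    calc b * (lam ^ (1 / b) * lam ^ (s / b) - lam ^ (s / b))
        = lam ^ (s / b) * (b * (lam ^ (1 / b) - 1)) := by ring
      _ ≤ lam ^ (s / b) * (W * (lam ^ (1 / W) - 1)) :=
        mul_le_mul_of_nonneg_left (mul_rpow_one_div_sub_one_le hlam hW hWb) (by positivity)

theorem stmt_9_general (m n : ℕ)
    (A : Fin m → Fin n → ℝ) (hA : ∀ i j, A i j = 0 ∨ A i j = 1)
    (b : Fin m → ℕ)
    (W : ℝ) (hW : 1 ≤ W) (hwidth : ∀ i, W ≤ (b i : ℝ))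
    (lam : ℝ) (hlam : 1 < lam)
    (k : ℝ)
    (S : Finset (Fin n)) (ℓ : Fin n) (hℓ : ℓ ∉ S)
    (w w' : Fin m → ℝ)
    (hw : ∀ i, w i = lam ^ ((∑ j ∈ S, A i j) / (b i : ℝ)) - 1)
    (hw' : ∀ i, w' i = lam ^ ((∑ j ∈ insert ℓ S, A i j) / (b i : ℝ)) - 1)
    (hsel : ∑ i, A i ℓ * w i < lam - 1)
    (hcol : ∑ i, A i ℓ ≤ k) :
    ∑ i, (b i : ℝ) * (w' i - w i) < W * lam ^ (1 / W) * (k + lam - 1) := by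
  have hW0 : 0 < W := by linarith
  set D := W * (lam ^ (1 / W) - 1)
  have hD : 0 < D := mul_pos hW0 (sub_pos.2 (one_lt_rpow hlam (by positivity)))
  have hrow : ∀ i, (b i : ℝ) * (w' i - w i) ≤ A i ℓ * (w i + 1) * D := fun i => by
    have hw1 : w i + 1 = lam ^ ((∑ j ∈ S, A i j) / (b i : ℝ)) := by rw [hw]; ring
    have hinc : w' i - w i =
        lam ^ ((A i ℓ + ∑ j ∈ S, A i j) / (b i : ℝ)) - lam ^ ((∑ j ∈ S, A i j) / (b i : ℝ)) := by
      rw [hw', hw, sum_insert hℓ]; ring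
    rw [hinc, hw1]
    exact mul_rpow_add_div_sub_rpow_div_le hlam.le hW0 (hwidth i) (hA i ℓ)
  have hmass : ∑ i, A i ℓ * (w i + 1) < k + lam - 1 := by
    simp only [mul_add_one, sum_add_distrib]
    linarith
  have hmass0 : 0 ≤ ∑ i, A i ℓ * (w i + 1) := sum_nonneg fun i _ => by
    rcases hA i ℓ with h | h <;> simp [h, hw i, rpow_nonneg (by linarith : (0 : ℝ) ≤ lam)]
  calc ∑ i, (b i : ℝ) * (w' i - w i) ≤ (∑ i, A i ℓ * (w i + 1)) * D := by
        rw [sum_mul]; exact sum_le_sum fun i _ => hrow i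
    _ < (k + lam - 1) * D := mul_lt_mul_of_pos_right hmass hD
    _ ≤ (k + lam - 1) * (W * lam ^ (1 / W)) := by gcongr <;> linarith
    _ = W * lam ^ (1 / W) * (k + lam - 1) := by ring

/-- Single-step weight-increase bound in the binary
`k`-column-sparse setting: if `w_i = λ^{(Σ_{j∈S} A_{ij})/b_i} − 1` and
`w'_i = λ^{(Σ_{j∈S∪{ℓ}} A_{ij})/b_i} − 1`, `Σ_i A_{iℓ} w_i < λ − 1`, and
`Σ_i A_{iℓ} ≤ k`, then `Σ_i b_i (w'_i − w_i) < W·λ^{1/W}·(k + λ − 1)`. -/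
theorem stmt_9 (m n : ℕ)
    (A : Fin m → Fin n → ℝ) (hA : ∀ i j, A i j = 0 ∨ A i j = 1)
    (b : Fin m → ℕ) (hb : ∀ i, 1 ≤ b i)
    (W : ℝ) (hW : 1 ≤ W) (hwidth : ∀ i, W ≤ (b i : ℝ))
    (lam : ℝ) (hlam : 1 < lam)
    (k : ℝ)
    (S : Finset (Fin n)) (ℓ : Fin n) (hℓ : ℓ ∉ S)
    (w w' : Fin m → ℝ)
    (hw : ∀ i, w i = lam ^ ((∑ j ∈ S, A i j) / (b i : ℝ)) - 1)
    (hw' : ∀ i, w' i = lam ^ ((∑ j ∈ insert ℓ S, A i j) / (b i : ℝ)) - 1)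
    (hsel : ∑ i, A i ℓ * w i < lam - 1)
    (hcol : ∑ i, A i ℓ ≤ k) :
    ∑ i, (b i : ℝ) * (w' i - w i) < W * lam ^ (1 / W) * (k + lam - 1) :=
  stmt_9_general m n A hA b W hW hwidth lam hlam k S ℓ hℓ w w' hw hw' hsel hcol
end

section
/- Let m ≥ 1, W ≥ 1, let A ∈ [0,1]^{m×n} with W·A_{ij} ≤ b_i for all i, j where b ∈ [1,∞)^m, let w ∈ ℝ₊^m be nonnegative weights, let j ∈ [n] be a column index, and set λ = e^W·m. Then Σ_{i=1}^m b_i w_i · λ^{A_{ij}/b_i} ≤ Σ_{i=1}^m b_i w_i + e·W·m^{1/W} · Σ_{i=1}^m A_{ij} w_i. -/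
/-- With `λ = e^W·m`, width `W ≥ 1` (`W·A_{ij} ≤ b_i`),
`A ∈ [0,1]^{m×n}`, `b ∈ [1,∞)^m`, nonnegative weights `w`, and a column `j`:
`Σ_i b_i w_i·λ^{A_{ij}/b_i} ≤ Σ_i b_i w_i + e·W·m^{1/W}·Σ_i A_{ij} w_i`. -/
theorem stmt_15 (m n : ℕ) (hm : 1 ≤ m)
    (A : Fin m → Fin n → ℝ) (hA : ∀ i j, 0 ≤ A i j ∧ A i j ≤ 1)
    (b : Fin m → ℝ) (hb : ∀ i, 1 ≤ b i)
    (W : ℝ) (hW : 1 ≤ W) (hwidth : ∀ i j, W * A i j ≤ b i)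
    (w : Fin m → ℝ) (hw : ∀ i, 0 ≤ w i)
    (j : Fin n)
    (lam : ℝ) (hlam : lam = Real.exp W * m) :
    ∑ i, b i * w i * lam ^ (A i j / b i)
      ≤ ∑ i, b i * w i
        + Real.exp 1 * W * (m : ℝ) ^ (1 / W) * ∑ i, A i j * w i := by
  have hW0 : 0 < W := lt_of_lt_of_le one_pos hW
  have hm0 : (0:ℝ) < m := by exact_mod_cast hm
  have hlam0 : 0 ≤ lam := by
    rw [hlam]; positivity
  have hc : lam ^ (1 / W) = Real.exp 1 * (m : ℝ) ^ (1 / W) := by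
    rw [hlam, Real.mul_rpow (Real.exp_pos W).le hm0.le, ← Real.exp_one_rpow W,
      ← Real.rpow_mul (Real.exp_pos 1).le, mul_one_div, div_self hW0.ne', Real.rpow_one]
  rw [Finset.mul_sum, ← Finset.sum_add_distrib]
  apply Finset.sum_le_sum
  intro i _
  have hbi : (0:ℝ) < b i := lt_of_lt_of_le one_pos (hb i)
  have hp1 : 0 ≤ W * A i j / b i := by
    have := (hA i j).1; positivity
  have hp2 : W * A i j / b i ≤ 1 := by
    rw [div_le_one hbi]; exact hwidth i j
  have key : lam ^ (A i j / b i) ≤ 1 + (W * A i j / b i) * (lam ^ (1/W) - 1) := by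
    have hb1 : (-1:ℝ) ≤ lam ^ (1/W) - 1 := by
      have : (0:ℝ) ≤ lam ^ (1/W) := Real.rpow_nonneg hlam0 _
      linarith
    have := rpow_one_add_le_one_add_mul_self hb1 hp1 hp2
    rw [add_sub_cancel, ← Real.rpow_mul hlam0] at this
    have he : 1 / W * (W * A i j / b i) = A i j / b i := by
      field_simp
    rwa [he] at this
  have hwbi : 0 ≤ b i * w i := mul_nonneg hbi.le (hw i)
  calc b i * w i * lam ^ (A i j / b i)
      ≤ b i * w i * (1 + (W * A i j / b i) * (lam ^ (1/W) - 1)) := by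
        exact mul_le_mul_of_nonneg_left key hwbi
    _ = b i * w i + W * (A i j * w i) * (lam ^ (1/W) - 1) := by
        field_simp
    _ ≤ b i * w i + Real.exp 1 * W * (m:ℝ) ^ (1/W) * (A i j * w i) := by
        have hAw : 0 ≤ A i j * w i := mul_nonneg (hA i j).1 (hw i)
        have h1 : lam ^ (1/W) - 1 ≤ lam ^ (1/W) := by linarith
        rw [hc]
        nlinarith [mul_nonneg (mul_nonneg hW0.le hAw) (Real.rpow_nonneg hm0.le (1/W))]
end
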